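/- arXiv:2310.01054 — 2 statements merged into one kernel-verified Lean document; each statement's English description precedes it below -/
import Mathlib

section
/- Let G be a closed subgroup of (ℝ^N, +) that is not discrete. Then G contains a line, i.e., there exists a unit vector e ∈ ℝ^N such that t·e ∈ G for all t ∈ ℝ. -/
open MeasureTheory Set

theorem stmt_9 (N : ℕ)
    (G : AddSubgroup (EuclideanSpace ℝ (Fin N)))
    (hclosed : IsClosed (G : Set (EuclideanSpace ℝ (Fin N))))
    (hnotdiscrete : ∀ ε : ℝ, 0 < ε → ∃ g ∈ G, g ≠ 0 ∧ ‖g‖ < ε) :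
    ∃ e : EuclideanSpace ℝ (Fin N), ‖e‖ = 1 ∧ ∀ t : ℝ, t • e ∈ G := by
  -- choose a sequence tending to 0
  have hseq : ∀ n : ℕ, ∃ g : EuclideanSpace ℝ (Fin N),
      g ∈ G ∧ g ≠ 0 ∧ ‖g‖ < 1 / (n + 1) := by
    intro n
    obtain ⟨g, hg, hg0, hgn⟩ := hnotdiscrete (1 / (n + 1)) (by positivity)
    exact ⟨g, hg, hg0, hgn⟩
  choose g hgG hg0 hgn using hseq
  have hpos : ∀ n, 0 < ‖g n‖ := fun n => norm_pos_iff.mpr (hg0 n)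
  set u : ℕ → EuclideanSpace ℝ (Fin N) := fun n => ‖g n‖⁻¹ • g n with hu
  have hunorm : ∀ n, ‖u n‖ = 1 := by
    intro n
    simp [hu, norm_smul, abs_of_pos (inv_pos.mpr (hpos n)),
      inv_mul_cancel₀ (hpos n).ne']
  have husphere : ∀ n, u n ∈ Metric.sphere (0 : EuclideanSpace ℝ (Fin N)) 1 := by
    intro n; simpa using hunorm n
  obtain ⟨e, he, φ, hφ, hlim⟩ :=
    (isCompact_sphere (0 : EuclideanSpace ℝ (Fin N)) 1).tendsto_subseq husphere
  have henorm : ‖e‖ = 1 := by simpa using he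
  refine ⟨e, henorm, fun t => ?_⟩
  -- c n = ‖g (φ n)‖ → 0
  set c : ℕ → ℝ := fun n => ‖g (φ n)‖ with hc
  have hc0 : Filter.Tendsto c Filter.atTop (nhds 0) := by
    have h1 : Filter.Tendsto (fun n : ℕ => 1 / ((φ n : ℝ) + 1)) Filter.atTop (nhds 0) := by
      apply Filter.Tendsto.comp tendsto_one_div_add_atTop_nhds_zero_nat
      exact hφ.tendsto_atTop
    refine squeeze_zero (fun n => (hpos _).le) (fun n => (hgn (φ n)).le) h1
  -- the approximating sequence
  set s : ℕ → EuclideanSpace ℝ (Fin N) := fun n => (⌊t / c n⌋ : ℤ) • g (φ n) with hs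
  have hsG : ∀ n, s n ∈ G := fun n => zsmul_mem (hgG (φ n)) _
  have hkey : ∀ n, s n = ((⌊t / c n⌋ : ℝ) * c n) • u (φ n) := by
    intro n
    show (⌊t / c n⌋ : ℤ) • g (φ n) = (↑⌊t / c n⌋ * c n) • (‖g (φ n)‖⁻¹ • g (φ n))
    rw [smul_smul, mul_assoc, mul_inv_cancel₀ (hpos (φ n)).ne', mul_one,
      Int.cast_smul_eq_zsmul ℝ]
  -- scalar convergence
  have hscal : Filter.Tendsto (fun n => (⌊t / c n⌋ : ℝ) * c n) Filter.atTop (nhds t) := by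
    rw [← tendsto_sub_nhds_zero_iff]
    refine squeeze_zero_norm (fun n => ?_) hc0
    have hcpos : 0 < c n := hpos (φ n)
    have h1 : (⌊t / c n⌋ : ℝ) ≤ t / c n := Int.floor_le _
    have h2 : t / c n < ⌊t / c n⌋ + 1 := Int.lt_floor_add_one _
    rw [Real.norm_eq_abs, abs_le]
    constructor
    · linarith [(div_lt_iff₀ hcpos).mp h2]
    · linarith [(le_div_iff₀ hcpos).mp h1, hcpos]
  have hslim : Filter.Tendsto s Filter.atTop (nhds (t • e)) := by
    have := hscal.smul hlim
    simpa [← hkey] using this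
  exact hclosed.mem_of_tendsto hslim (Filter.Eventually.of_forall hsG)
end

section
/- Let G be a closed subgroup of ℝ^N containing a line ℝe for some unit vector e, and let f ∈ L^1(ℝ^N;[0,1]) satisfy ∑_{n=1}^{k} f(x + t_n e) ≤ 1 for almost every x, for all k ∈ ℕ and all distinct t_1, …, t_k ∈ (0,1). Then f = 0 almost everywhere. -/
open MeasureTheory Set
open scoped ENNReal

/-!
Translation invariance of Lebesgue measure gives `∫_{B(0,R)} f ≤ ∫_{B(0,R+‖e‖)} f(· + t e)` for
every `t ∈ (0,1)`. Integrating the hypothesis over `B(0,R+‖e‖)` for `k` distinct shifts therefore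
yields `k ∫_{B(0,R)} f ≤ vol B(0,R+‖e‖)`. As `k` is arbitrary, `f` vanishes a.e. on every ball.
-/

theorem le_lintegral_finsetSum {α ι : Type*} [MeasurableSpace α] {μ : Measure α}
    (s : Finset ι) (f : ι → α → ℝ≥0∞) :
    ∑ i ∈ s, ∫⁻ a, f i a ∂μ ≤ ∫⁻ a, ∑ i ∈ s, f i a ∂μ := by
  classical
  induction s using Finset.induction_on with
  | empty => simp
  | insert i s hi ih =>
    simp only [Finset.sum_insert hi]
    calc ∫⁻ a, f i a ∂μ + ∑ j ∈ s, ∫⁻ a, f j a ∂μ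
        ≤ ∫⁻ a, f i a ∂μ + ∫⁻ a, ∑ j ∈ s, f j a ∂μ := by gcongr
      _ ≤ ∫⁻ a, f i a + ∑ j ∈ s, f j a ∂μ := le_lintegral_add _ _

section Translates

variable {G : Type*} [MeasurableSpace G] [AddGroup G] [MeasurableAdd G] {μ : Measure G}
  [μ.IsAddRightInvariant]

theorem setLIntegral_le_setLIntegral_comp_add_right (f : G → ℝ≥0∞) {s t : Set G} (v : G)
    (h : (· + v) ⁻¹' s ⊆ t) :
    ∫⁻ x in s, f x ∂μ ≤ ∫⁻ x in t, f (x + v) ∂μ := by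
  rw [← (measurePreserving_add_right μ v).setLIntegral_comp_preimage_emb
    (measurableEmbedding_addRight v)]
  exact lintegral_mono_set h

theorem card_mul_setLIntegral_le_measure {ι : Type*} [Fintype ι] (f : G → ℝ≥0∞)
    {s t : Set G} (v : ι → G) (hv : ∀ i, (· + v i) ⁻¹' s ⊆ t)
    (hsum : ∀ᵐ x ∂μ, ∑ i, f (x + v i) ≤ 1) :
    Fintype.card ι * ∫⁻ x in s, f x ∂μ ≤ μ t :=
  calc Fintype.card ι * ∫⁻ x in s, f x ∂μ = ∑ _i : ι, ∫⁻ x in s, f x ∂μ := by simp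
    _ ≤ ∑ i, ∫⁻ x in t, f (x + v i) ∂μ := Finset.sum_le_sum fun i _ ↦
      setLIntegral_le_setLIntegral_comp_add_right f (v i) (hv i)
    _ ≤ ∫⁻ x in t, ∑ i, f (x + v i) ∂μ := le_lintegral_finsetSum _ _
    _ ≤ ∫⁻ _ in t, 1 ∂μ := lintegral_mono_ae (ae_restrict_of_ae hsum)
    _ = μ t := setLIntegral_one t

end Translates

theorem ae_eq_zero_of_sum_translates_le_one {E : Type*} [NormedAddCommGroup E]
    [MeasurableSpace E] [BorelSpace E] [ProperSpace E] {μ : Measure E} [μ.IsAddRightInvariant]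
    [IsFiniteMeasureOnCompacts μ] {f : E → ℝ≥0∞} (hf : AEMeasurable f μ) (r : ℝ)
    (htranslates : ∀ k : ℕ, ∃ v : Fin k → E, (∀ i, ‖v i‖ ≤ r) ∧
      ∀ᵐ x ∂μ, ∑ i, f (x + v i) ≤ 1) :
    f =ᵐ[μ] 0 := by
  suffices hball : ∀ R : ℕ, ∫⁻ x in Metric.closedBall 0 R, f x ∂μ = 0 by
    rw [← Measure.restrict_univ (μ := μ), ← Metric.iUnion_closedBall_nat 0, Filter.EventuallyEq,
      ae_restrict_iUnion_iff]
    exact fun R ↦ (lintegral_eq_zero_iff' hf.restrict).mp (hball R)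
  intro R
  by_contra hne
  obtain ⟨k, hk⟩ := ENNReal.exists_nat_mul_gt hne
    (measure_closedBall_lt_top (μ := μ) (x := 0) (r := R + r)).ne
  obtain ⟨v, hv, hsum⟩ := htranslates k
  have hsub : ∀ i, (· + v i) ⁻¹' Metric.closedBall 0 R ⊆ Metric.closedBall 0 (R + r) := by
    intro i x hx
    simp only [mem_preimage, mem_closedBall_zero_iff] at hx ⊢
    calc ‖x‖ = ‖x + v i - v i‖ := by rw [add_sub_cancel_right]
      _ ≤ ‖x + v i‖ + ‖v i‖ := norm_sub_le _ _
      _ ≤ R + r := add_le_add hx (hv i)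
  have hle := card_mul_setLIntegral_le_measure f v hsub hsum
  rw [Fintype.card_fin] at hle
  exact hle.not_gt hk

theorem stmt_10_general (N : ℕ)
    (e : EuclideanSpace ℝ (Fin N))
    (f : EuclideanSpace ℝ (Fin N) → ℝ)
    (hf : Integrable f) (hf01 : ∀ x, f x ∈ Set.Icc (0 : ℝ) 1)
    (hsum : ∀ (k : ℕ) (t : Fin k → ℝ), Function.Injective t →
      (∀ i, t i ∈ Set.Ioo (0 : ℝ) 1) →
      ∀ᵐ x : EuclideanSpace ℝ (Fin N), ∑ i, f (x + t i • e) ≤ 1) :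
    f =ᵐ[volume] 0 := by
  have hf0 : ∀ x, 0 ≤ f x := fun x ↦ (hf01 x).1
  have hzero : (fun x ↦ ENNReal.ofReal (f x)) =ᵐ[volume] 0 := by
    refine ae_eq_zero_of_sum_translates_le_one hf.aemeasurable.ennreal_ofReal ‖e‖ fun k ↦ ?_
    let emb : Fin k ↪ Ioo (0 : ℝ) 1 :=
      Fin.valEmbedding.trans ((Ioo_infinite zero_lt_one).natEmbedding _)
    have ht : ∀ i, (emb i : ℝ) ∈ Ioo (0 : ℝ) 1 := fun i ↦ (emb i).2
    refine ⟨fun i ↦ (emb i : ℝ) • e, fun i ↦ ?_, ?_⟩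
    · rw [norm_smul, Real.norm_of_nonneg (ht i).1.le]
      exact mul_le_of_le_one_left (norm_nonneg e) (ht i).2.le
    · filter_upwards [hsum k _ (Subtype.val_injective.comp emb.injective) ht] with x hx
      rw [← ENNReal.ofReal_sum_of_nonneg fun i _ ↦ hf0 _]
      exact ENNReal.ofReal_le_one.mpr hx
  filter_upwards [hzero] with x hx
  exact le_antisymm (ENNReal.ofReal_eq_zero.mp hx) (hf0 x)

theorem stmt_10 (N : ℕ)
    (G : AddSubgroup (EuclideanSpace ℝ (Fin N)))
    (hclosed : IsClosed (G : Set (EuclideanSpace ℝ (Fin N))))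
    (e : EuclideanSpace ℝ (Fin N)) (he : ‖e‖ = 1)
    (hline : ∀ t : ℝ, t • e ∈ G)
    (f : EuclideanSpace ℝ (Fin N) → ℝ)
    (hf : Integrable f) (hf01 : ∀ x, f x ∈ Set.Icc (0 : ℝ) 1)
    (hsum : ∀ (k : ℕ) (t : Fin k → ℝ), Function.Injective t →
      (∀ i, t i ∈ Set.Ioo (0 : ℝ) 1) →
      ∀ᵐ x : EuclideanSpace ℝ (Fin N), ∑ i, f (x + t i • e) ≤ 1) :
    f =ᵐ[volume] 0 :=
  stmt_10_general N e f hf hf01 hsum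
end
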